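/- If the weak DA completion WDA(Π) (resp. strong DA completion SDA(Π)) of a GEDP Π has a consistent answer set S, then S is an answer set of WDDA(Π) (resp. SDDA(Π)). -/
import Mathlib


/-- Literals over atoms (ℕ): positive or explicitly negated. -/
inductive Lit where
  | pos : ℕ → Lit
  | neg : ℕ → Lit
deriving DecidableEq

/-- Explicit negation (¬¬L = L). -/
def Lit.compl : Lit → Lit
  | .pos n => .neg n
  | .neg n => .pos n

/-- A GEDP rule: head⁺ ; not head⁻ ← body⁺ , not body⁻. -/
structure Rule where
  headPos : Set Lit
  headNeg : Set Lit
  bodyPos : Set Lit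
  bodyNeg : Set Lit

abbrev Program := Set Rule

/-- A not-free rule: head ← body over literals. -/
structure NFRule where
  head : Set Lit
  body : Set Lit

/-- S satisfies a not-free rule. -/
def NFRule.sat (S : Set Lit) (r : NFRule) : Prop :=
  r.body ⊆ S → (r.head ∩ S).Nonempty

/-- Candidate for answer set of a not-free program: satisfies all rules and
    contains a complementary pair only if it is Lit (= Set.univ). -/
def candNF (P : Set NFRule) (S : Set Lit) : Prop :=
  (∀ r ∈ P, NFRule.sat S r) ∧ ((∃ L, L ∈ S ∧ Lit.compl L ∈ S) → S = Set.univ)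

/-- Answer set of a not-free program: a minimal candidate. -/
def isAnswerSetNF (P : Set NFRule) (S : Set Lit) : Prop :=
  candNF P S ∧ ∀ T, candNF P T → T ⊆ S → T = S

/-- Reduct Π^S of a GEDP. -/
def reduct (P : Program) (S : Set Lit) : Set NFRule :=
  { nr | ∃ r ∈ P, r.headNeg ⊆ S ∧ r.bodyNeg ∩ S = ∅ ∧ nr = ⟨r.headPos, r.bodyPos⟩ }

/-- Answer set of a GEDP. -/
def isAnswerSet (P : Program) (S : Set Lit) : Prop :=
  isAnswerSetNF (reduct P S) S

/-- Π is contradictory iff Lit is its answer set. -/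
def contradictory (P : Program) : Prop := isAnswerSet P Set.univ

/-- Π is consistent iff it has a consistent answer set. -/
def consistentProgram (P : Program) : Prop := ∃ S, isAnswerSet P S ∧ S ≠ Set.univ

def hasBody (r : Rule) : Prop := (r.bodyPos ∪ r.bodyNeg).Nonempty

/-- Rules of Π with (NAF-)literal (L if pos, not L otherwise) in the head and nonempty body. -/
def headOcc (P : Program) (L : Lit) (pos : Bool) : Set Rule :=
  {r ∈ P | (if pos then L ∈ r.headPos else L ∈ r.headNeg) ∧ hasBody r}

/-- f chooses one body element (literal: true, NAF-literal: false) from each rule of R. -/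
def isChoice (R : Set Rule) (f : Rule → Lit × Bool) : Prop :=
  ∀ r ∈ R, ((f r).2 = true ∧ (f r).1 ∈ r.bodyPos) ∨ ((f r).2 = false ∧ (f r).1 ∈ r.bodyNeg)

/-- AC completion rules: unfolding Σ₁;…;Σ_p ← ℓ into GEDP rules by choice functions. -/
def acRules (P : Program) : Program :=
  { r' | ∃ (L : Lit) (pos : Bool) (f : Rule → Lit × Bool),
      (headOcc P L pos).Nonempty ∧ isChoice (headOcc P L pos) f ∧
      r' = ⟨{l | ∃ r ∈ headOcc P L pos, f r = (l, true)},
            {l | ∃ r ∈ headOcc P L pos, f r = (l, false)},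
            (if pos then {L} else ∅),
            (if pos then ∅ else {L})⟩ }

def AC (P : Program) : Program := P ∪ acRules P

/-- Weak DC contrapositive of a rule. -/
def wdc (r : Rule) : Rule := ⟨r.bodyNeg, r.bodyPos, r.headNeg, r.headPos⟩

def WDC (P : Program) : Program := P ∪ wdc '' P

/-- Strong DC contrapositive of a rule. -/
def sdc (r : Rule) : Rule :=
  ⟨(Lit.compl '' r.bodyPos) ∪ r.bodyNeg, ∅, (Lit.compl '' r.headPos) ∪ r.headNeg, ∅⟩

def SDC (P : Program) : Program := P ∪ sdc '' P

/-- Weak DA completion rules: not Lᵢ ← Γ₁,…,Γ_p (resp. Lᵢ ← …), unfolded by choices. -/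
def wdaRules (P : Program) : Program :=
  { r' | ∃ (L : Lit) (pos : Bool) (f : Rule → Lit × Bool),
      (headOcc P L pos).Nonempty ∧ isChoice (headOcc P L pos) f ∧
      r' = ⟨(if pos then ∅ else {L}),
            (if pos then {L} else ∅),
            {l | ∃ r ∈ headOcc P L pos, f r = (l, false)},
            {l | ∃ r ∈ headOcc P L pos, f r = (l, true)}⟩ }

def WDA (P : Program) : Program := P ∪ wdaRules P

/-- Strong DA completion rules: ¬Lᵢ ← Γ₁,…,Γ_p (resp. Lᵢ ← …), unfolded by choices. -/
def sdaRules (P : Program) : Program :=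
  { r' | ∃ (L : Lit) (pos : Bool) (f : Rule → Lit × Bool),
      (headOcc P L pos).Nonempty ∧ isChoice (headOcc P L pos) f ∧
      r' = ⟨(if pos then {Lit.compl L} else {L}), ∅,
            {l | ∃ r ∈ headOcc P L pos, (f r = (Lit.compl l, true) ∨ f r = (l, false))},
            ∅⟩ }

def SDA (P : Program) : Program := P ∪ sdaRules P

/-- Default AC completion rules: AC rules with the default guard Δᵢ of one body Σᵢ. -/
def dacRules (P : Program) : Program :=
  { r' | ∃ (L : Lit) (pos : Bool) (f : Rule → Lit × Bool) (r0 : Rule),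
      r0 ∈ headOcc P L pos ∧ isChoice (headOcc P L pos) f ∧
      r' = ⟨{l | ∃ r ∈ headOcc P L pos, f r = (l, true)},
            {l | ∃ r ∈ headOcc P L pos, f r = (l, false)},
            (if pos then {L} else ∅),
            (if pos then ∅ else {L}) ∪ (Lit.compl '' r0.bodyPos) ∪ r0.bodyNeg⟩ }

def DAC (P : Program) : Program := P ∪ dacRules P

/-- Weak default DA completion rules: WDA rules with guard δʷ. -/
def wddaRules (P : Program) : Program :=
  { r' | ∃ (L : Lit) (pos : Bool) (f : Rule → Lit × Bool),
      (headOcc P L pos).Nonempty ∧ isChoice (headOcc P L pos) f ∧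
      r' = ⟨(if pos then ∅ else {L}),
            (if pos then {L} else ∅),
            {l | ∃ r ∈ headOcc P L pos, f r = (l, false)},
            {l | ∃ r ∈ headOcc P L pos, f r = (l, true)} ∪ {if pos then L else Lit.compl L}⟩ }

def WDDA (P : Program) : Program := P ∪ wddaRules P

/-- Strong default DA completion rules: SDA rules with guard δˢ. -/
def sddaRules (P : Program) : Program :=
  { r' | ∃ (L : Lit) (pos : Bool) (f : Rule → Lit × Bool),
      (headOcc P L pos).Nonempty ∧ isChoice (headOcc P L pos) f ∧
      r' = ⟨(if pos then {Lit.compl L} else {L}), ∅,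
            {l | ∃ r ∈ headOcc P L pos, (f r = (Lit.compl l, true) ∨ f r = (l, false))},
            {if pos then L else Lit.compl L}⟩ }

def SDDA (P : Program) : Program := P ∪ sddaRules P

/-- The fact L ←. -/
def factOf (L : Lit) : Rule := ⟨{L}, ∅, ∅, ∅⟩

def isFact (r : Rule) : Prop := r.bodyPos = ∅ ∧ r.bodyNeg = ∅

def isAtom (L : Lit) : Prop := ∃ n, L = Lit.pos n

/-- Positive disjunctive program: no default negation, only atoms. -/
def isPDP (P : Program) : Prop :=
  ∀ r ∈ P, r.headNeg = ∅ ∧ r.bodyNeg = ∅ ∧ (∀ L ∈ r.headPos ∪ r.bodyPos, isAtom L)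

def isEDP (P : Program) : Prop := ∀ r ∈ P, r.headNeg = ∅


lemma lit_compl_compl (L : Lit) : Lit.compl (Lit.compl L) = L := by
  cases L <;> rfl

lemma key_shrink (R R' : Set NFRule) (S : Set Lit) (hsub : R' ⊆ R)
    (hS : isAnswerSetNF R S)
    (hextra : ∀ r ∈ R, r ∉ R' → ¬ r.body ⊆ S) : isAnswerSetNF R' S := by
  obtain ⟨⟨hsat, hpair⟩, hmin⟩ := hS
  refine ⟨⟨fun r hr => hsat r (hsub hr), hpair⟩, ?_⟩
  intro T ⟨hTsat, hTpair⟩ hTS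
  refine hmin T ⟨?_, hTpair⟩ hTS
  intro r hr
  by_cases h : r ∈ R'
  · exact hTsat r h
  · intro hb
    exact absurd (hb.trans hTS) (hextra r hr h)

/-- a consistent answer set of WDA(Π) (resp. SDA(Π)) is an answer
    set of WDDA(Π) (resp. SDDA(Π)). -/
theorem da_consistent_answer_set_dda (P : Program) :
    (∀ S, isAnswerSet (WDA P) S → S ≠ Set.univ → isAnswerSet (WDDA P) S) ∧
    (∀ S, isAnswerSet (SDA P) S → S ≠ Set.univ → isAnswerSet (SDDA P) S) := by
  constructor
  · -- WDA case
    intro S hS hne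
    have hsub : reduct (WDDA P) S ⊆ reduct (WDA P) S := by
      rintro nr ⟨r, hr, hhn, hbn, hnr⟩
      rcases hr with hr | ⟨L, pos, f, hne', hch, rfl⟩
      · exact ⟨r, Or.inl hr, hhn, hbn, hnr⟩
      · refine ⟨⟨(if pos then ∅ else {L}), (if pos then {L} else ∅),
          {l | ∃ r ∈ headOcc P L pos, f r = (l, false)},
          {l | ∃ r ∈ headOcc P L pos, f r = (l, true)}⟩,
          Or.inr ⟨L, pos, f, hne', hch, rfl⟩, hhn, ?_, hnr⟩
        apply Set.eq_empty_of_subset_empty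
        rw [← hbn]
        exact Set.inter_subset_inter_left _ (Set.subset_union_left)
    refine key_shrink _ _ S hsub hS ?_
    rintro nr hnr hnot
    obtain ⟨r, hr, hhn, hbn, hnreq⟩ := hnr
    rcases hr with hr | ⟨L, pos, f, hne', hch, rfl⟩
    · exact absurd ⟨r, Or.inl hr, hhn, hbn, hnreq⟩ hnot
    · intro hbody
      have hsatS := hS.1.1 nr ⟨_, Or.inr ⟨L, pos, f, hne', hch, rfl⟩, hhn, hbn, hnreq⟩
      have h2 := hsatS hbody
      rw [hnreq] at h2
      cases pos with
      | true => simp at h2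
      | false =>
        have hgS : Lit.compl L ∈ S := by
          by_contra hgS
          refine hnot ⟨⟨(if false then ∅ else {L}), (if false then {L} else ∅),
            {l | ∃ r ∈ headOcc P L false, f r = (l, false)},
            {l | ∃ r ∈ headOcc P L false, f r = (l, true)} ∪ {if false then L else Lit.compl L}⟩,
            Or.inr ⟨L, false, f, hne', hch, rfl⟩, hhn, ?_, hnreq⟩
          show ({l | ∃ r ∈ headOcc P L false, f r = (l, true)}
            ∪ {if (false : Bool) = true then L else Lit.compl L}) ∩ S = ∅
          rw [Set.union_inter_distrib_right, hbn, Set.empty_union]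
          simpa using hgS
        obtain ⟨x, hx1, hx2⟩ := h2
        simp only [Bool.false_eq_true, if_false, Set.mem_singleton_iff] at hx1
        subst hx1
        exact hne (hS.1.2 ⟨x, hx2, hgS⟩)
  · -- SDA case
    intro S hS hne
    have hsub : reduct (SDDA P) S ⊆ reduct (SDA P) S := by
      rintro nr ⟨r, hr, hhn, hbn, hnr⟩
      rcases hr with hr | ⟨L, pos, f, hne', hch, rfl⟩
      · exact ⟨r, Or.inl hr, hhn, hbn, hnr⟩
      · exact ⟨⟨(if pos then {Lit.compl L} else {L}), ∅,
          {l | ∃ r ∈ headOcc P L pos, (f r = (Lit.compl l, true) ∨ f r = (l, false))},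
          ∅⟩, Or.inr ⟨L, pos, f, hne', hch, rfl⟩, hhn, by simp, hnr⟩
    refine key_shrink _ _ S hsub hS ?_
    rintro nr hnr hnot
    obtain ⟨r, hr, hhn, hbn, hnreq⟩ := hnr
    rcases hr with hr | ⟨L, pos, f, hne', hch, rfl⟩
    · exact absurd ⟨r, Or.inl hr, hhn, hbn, hnreq⟩ hnot
    · intro hbody
      have hsatS := hS.1.1 nr ⟨_, Or.inr ⟨L, pos, f, hne', hch, rfl⟩, hhn, hbn, hnreq⟩
      have h2 := hsatS hbody
      rw [hnreq] at h2
      have hgS : (if pos then L else Lit.compl L) ∈ S := by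
        by_contra hgS
        refine hnot ⟨⟨(if pos then {Lit.compl L} else {L}), ∅,
          {l | ∃ r ∈ headOcc P L pos, (f r = (Lit.compl l, true) ∨ f r = (l, false))},
          {if pos then L else Lit.compl L}⟩,
          Or.inr ⟨L, pos, f, hne', hch, rfl⟩, hhn, ?_, hnreq⟩
        show ({if pos = true then L else Lit.compl L} : Set Lit) ∩ S = ∅
        simpa using hgS
      obtain ⟨x, hx1, hx2⟩ := h2
      cases pos with
      | true =>
        simp only [if_pos, Set.mem_singleton_iff] at hx1
        subst hx1
        simp only [if_pos] at hgS
        exact hne (hS.1.2 ⟨Lit.compl L, hx2, by rw [lit_compl_compl]; exact hgS⟩)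
      | false =>
        simp only [Bool.false_eq_true, if_false, Set.mem_singleton_iff] at hx1
        subst hx1
        simp only [Bool.false_eq_true, if_false] at hgS
        exact hne (hS.1.2 ⟨x, hx2, hgS⟩)
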